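/- Let B = Eᴴ P⁻¹ E with P ∈ ℂ^{p×p} Hermitian positive definite and E ∈ ℂ^{p×q}. Define the block matrix X = [[M⁻¹ - ω₁ω₂M⁻¹EB†EᴴM⁻¹, -ω₂M⁻¹EB†], [ω₁B†EᴴM⁻¹, B†]] where M is Hermitian positive definite and B† is the Moore–Penrose inverse of B. Then X is the Moore–Penrose inverse of B(ω₁,ω₂) = [[M, ω₂E], [-ω₁Eᴴ, B - ω₁ω₂EᴴM⁻¹E]], i.e., X satisfies the four Penrose equations with B(ω₁,ω₂). -/

import Mathlib

open Matrix
open scoped ComplexOrder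

/-!
As `M` is invertible, `Y = B(ω₁,ω₂)` factors as `L * fromBlocks M 0 0 B * U` with `L`, `U`
block unitriangular (the Schur complement of `M` in `Y` is `B`), and
`X = U⁻¹ * fromBlocks M⁻¹ 0 0 B† * L⁻¹`.
The first two Penrose equations survive any such change by units. For the last two, `Y * X` and
`X * Y` are `fromBlocks 1 0 0 (B * B†)` and `fromBlocks 1 0 0 (B† * B)` as soon as these commute
with `L` and `U`, i.e. as soon as `B * B† * Eᴴ = Eᴴ` and `E * B† * B = E`. Both hold because
`B = Eᴴ * P⁻¹ * E` with `P⁻¹` positive definite: `K * B = 0` forces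
`(K * Eᴴ) * P⁻¹ * (K * Eᴴ)ᴴ = 0`, hence `K * Eᴴ = 0`; take `K = 1 - B * B†`, and dually.
-/

structure IsMoorePenroseInverse {R : Type*} [Mul R] [Star R] (a b : R) : Prop where
  mul_mul_self : a * b * a = a
  mul_mul_self' : b * a * b = b
  isSelfAdjoint_mul : IsSelfAdjoint (a * b)
  isSelfAdjoint_mul' : IsSelfAdjoint (b * a)

namespace IsMoorePenroseInverse

variable {R : Type*} [Monoid R] [StarMul R]

theorem of_mul_eq_one {a b : R} (hab : a * b = 1) (hba : b * a = 1) :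
    IsMoorePenroseInverse a b where
  mul_mul_self := by rw [hab, one_mul]
  mul_mul_self' := by rw [hba, one_mul]
  isSelfAdjoint_mul := hab ▸ .one R
  isSelfAdjoint_mul' := hba ▸ .one R

theorem units_mul_mul {d e : R} (h : IsMoorePenroseInverse d e) (l u : Rˣ)
    (hl : Commute (l : R) (d * e)) (hu : Commute (u : R) (e * d)) :
    IsMoorePenroseInverse (l * d * u) (↑u⁻¹ * e * ↑l⁻¹) where
  mul_mul_self := calc
    l * d * u * (↑u⁻¹ * e * ↑l⁻¹) * (l * d * u) = l * (d * e * d) * u := by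
      simp only [mul_assoc, Units.mul_inv_cancel_left, Units.inv_mul_cancel_left]
    _ = l * d * u := by rw [h.mul_mul_self, mul_assoc]
  mul_mul_self' := calc
    ↑u⁻¹ * e * ↑l⁻¹ * (l * d * u) * (↑u⁻¹ * e * ↑l⁻¹) = ↑u⁻¹ * (e * d * e) * ↑l⁻¹ := by
      simp only [mul_assoc, Units.mul_inv_cancel_left, Units.inv_mul_cancel_left]
    _ = ↑u⁻¹ * e * ↑l⁻¹ := by rw [h.mul_mul_self', mul_assoc]
  isSelfAdjoint_mul := by
    have hprod : l * d * u * (↑u⁻¹ * e * ↑l⁻¹) = d * e := calc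
      _ = l * (d * e) * ↑l⁻¹ := by simp only [mul_assoc, Units.mul_inv_cancel_left]
      _ = d * e := by rw [hl.eq, Units.mul_inv_cancel_right]
    exact hprod ▸ h.isSelfAdjoint_mul
  isSelfAdjoint_mul' := by
    have hprod : ↑u⁻¹ * e * ↑l⁻¹ * (l * d * u) = e * d := calc
      _ = ↑u⁻¹ * (e * d * u) := by simp only [mul_assoc, Units.inv_mul_cancel_left]
      _ = e * d := by rw [← hu.eq, Units.inv_mul_cancel_left]
    exact hprod ▸ h.isSelfAdjoint_mul'

end IsMoorePenroseInverse

namespace Matrix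

variable {l m n α : Type*} [Fintype l] [Fintype n]

section Blocks

variable [Fintype m]

theorem fromBlocks_zero_zero_mul_fromBlocks_zero_zero [Semiring α] (A A' : Matrix m m α)
    (D D' : Matrix n n α) :
    fromBlocks A 0 0 D * fromBlocks A' 0 0 D' = fromBlocks (A * A') 0 0 (D * D') := by
  simp [fromBlocks_multiply]

variable [DecidableEq m] [DecidableEq n] [Ring α]

def fromBlocksLowerUnit (C : Matrix n m α) : (Matrix (m ⊕ n) (m ⊕ n) α)ˣ where
  val := fromBlocks 1 0 C 1
  inv := fromBlocks 1 0 (-C) 1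
  val_inv := by simp [fromBlocks_multiply]
  inv_val := by simp [fromBlocks_multiply]

def fromBlocksUpperUnit (B : Matrix m n α) : (Matrix (m ⊕ n) (m ⊕ n) α)ˣ where
  val := fromBlocks 1 B 0 1
  inv := fromBlocks 1 (-B) 0 1
  val_inv := by simp [fromBlocks_multiply]
  inv_val := by simp [fromBlocks_multiply]

theorem commute_fromBlocksLowerUnit {C : Matrix n m α} {K : Matrix n n α} (h : K * C = C) :
    Commute (fromBlocksLowerUnit C : Matrix (m ⊕ n) (m ⊕ n) α) (fromBlocks 1 0 0 K) := by
  simp [Commute, SemiconjBy, fromBlocksLowerUnit, fromBlocks_multiply, h]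

theorem commute_fromBlocksUpperUnit {B : Matrix m n α} {K : Matrix n n α} (h : B * K = B) :
    Commute (fromBlocksUpperUnit B : Matrix (m ⊕ n) (m ⊕ n) α) (fromBlocks 1 0 0 K) := by
  simp [Commute, SemiconjBy, fromBlocksUpperUnit, fromBlocks_multiply, h]

end Blocks

namespace PosDef

variable [Ring α] [PartialOrder α] [StarRing α] {N : Matrix l l α}

theorem eq_zero_of_mul_mul_conjTranspose_eq_zero (hN : N.PosDef) {A : Matrix m l α}
    (h : A * N * Aᴴ = 0) : A = 0 := by
  ext i j
  have hdiag : star (star (A i)) ⬝ᵥ N *ᵥ star (A i) = 0 := by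
    rw [← zero_apply (α := α) i i, ← h]
    simp only [star_star, mul_apply, dotProduct, mulVec, Finset.mul_sum, Finset.sum_mul, mul_assoc,
      conjTranspose_apply, Pi.star_apply]
    exact Finset.sum_comm
  by_contra hij
  have hrow : star (A i) ≠ 0 := fun h0 => hij (by simpa using congrFun h0 j)
  exact (hN.dotProduct_mulVec_pos hrow).ne' hdiag

theorem mul_conjTranspose_eq_zero_of_mul_eq_zero (hN : N.PosDef) {E : Matrix l n α}
    {K : Matrix m n α} (h : K * (Eᴴ * N * E) = 0) : K * Eᴴ = 0 := by
  refine hN.eq_zero_of_mul_mul_conjTranspose_eq_zero ?_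
  calc K * Eᴴ * N * (K * Eᴴ)ᴴ = K * (Eᴴ * N * E) * Kᴴ := by
        simp only [conjTranspose_mul, conjTranspose_conjTranspose, Matrix.mul_assoc]
    _ = 0 := by rw [h, Matrix.zero_mul]

theorem mul_eq_zero_of_mul_eq_zero (hN : N.PosDef) {E : Matrix l n α}
    {K : Matrix n m α} (h : Eᴴ * N * E * K = 0) : E * K = 0 := by
  rw [← conjTranspose_eq_zero]
  refine hN.eq_zero_of_mul_mul_conjTranspose_eq_zero ?_
  calc (E * K)ᴴ * N * (E * K)ᴴᴴ = Kᴴ * (Eᴴ * N * E * K) := by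
        simp only [conjTranspose_mul, conjTranspose_conjTranspose, Matrix.mul_assoc]
    _ = 0 := by rw [h, Matrix.mul_zero]

end PosDef

end Matrix

namespace IsMoorePenroseInverse

variable {l m n α : Type*} [Fintype l] [Fintype m] [Fintype n]

theorem fromBlocks_zero_zero [Semiring α] [StarRing α] {A A' : Matrix m m α}
    {D D' : Matrix n n α} (hA : IsMoorePenroseInverse A A') (hD : IsMoorePenroseInverse D D') :
    IsMoorePenroseInverse (fromBlocks A 0 0 D) (fromBlocks A' 0 0 D') := by
  refine ⟨?_, ?_, ?_, ?_⟩ <;> simp only [fromBlocks_zero_zero_mul_fromBlocks_zero_zero]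
  · rw [hA.mul_mul_self, hD.mul_mul_self]
  · rw [hA.mul_mul_self', hD.mul_mul_self']
  · exact IsHermitian.fromBlocks hA.isSelfAdjoint_mul conjTranspose_zero hD.isSelfAdjoint_mul
  · exact IsHermitian.fromBlocks hA.isSelfAdjoint_mul' conjTranspose_zero hD.isSelfAdjoint_mul'

section Gram

variable [DecidableEq n] [Ring α] [PartialOrder α] [StarRing α] {N : Matrix l l α}
  {E : Matrix l n α} {Bd : Matrix n n α}

theorem gram_mul_mul_conjTranspose (hN : N.PosDef) (h : IsMoorePenroseInverse (Eᴴ * N * E) Bd) :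
    Eᴴ * N * E * Bd * Eᴴ = Eᴴ := by
  have hK : (1 - Eᴴ * N * E * Bd) * (Eᴴ * N * E) = 0 := by
    rw [Matrix.sub_mul, h.mul_mul_self, Matrix.one_mul, sub_self]
  have := hN.mul_conjTranspose_eq_zero_of_mul_eq_zero hK
  rwa [Matrix.sub_mul, Matrix.one_mul, sub_eq_zero, eq_comm] at this

theorem mul_mul_gram (hN : N.PosDef) (h : IsMoorePenroseInverse (Eᴴ * N * E) Bd) :
    E * Bd * (Eᴴ * N * E) = E := by
  have hK : Eᴴ * N * E * (1 - Bd * (Eᴴ * N * E)) = 0 := by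
    rw [Matrix.mul_sub, ← Matrix.mul_assoc, h.mul_mul_self, Matrix.mul_one, sub_self]
  have := hN.mul_eq_zero_of_mul_eq_zero hK
  rwa [Matrix.mul_sub, Matrix.mul_one, sub_eq_zero, eq_comm, ← Matrix.mul_assoc] at this

end Gram

theorem fromBlocks_of_schur [DecidableEq m] [DecidableEq n] [CommRing α] [StarRing α]
    (A : Matrix m m α) [Invertible A] (B : Matrix m n α) (C : Matrix n m α) {S Sd : Matrix n n α}
    (hS : IsMoorePenroseInverse S Sd) (hC : S * Sd * C = C) (hB : B * Sd * S = B) :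
    IsMoorePenroseInverse (fromBlocks A B C (S + C * ⅟A * B))
      (fromBlocks (⅟A + ⅟A * B * Sd * C * ⅟A) (-(⅟A * B * Sd)) (-(Sd * C * ⅟A)) Sd) := by
  have hLDU : fromBlocks A B C (S + C * ⅟A * B) =
      (fromBlocksLowerUnit (C * ⅟A)).val * fromBlocks A 0 0 S *
        (fromBlocksUpperUnit (⅟A * B)).val := by
    rw [fromBlocks_eq_of_invertible₁₁, add_sub_cancel_right]
    rfl
  have hinv : fromBlocks (⅟A + ⅟A * B * Sd * C * ⅟A) (-(⅟A * B * Sd)) (-(Sd * C * ⅟A)) Sd =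
      (fromBlocksUpperUnit (⅟A * B))⁻¹.val * fromBlocks (⅟A) 0 0 Sd *
        (fromBlocksLowerUnit (C * ⅟A))⁻¹.val := by
    simp [fromBlocksUpperUnit, fromBlocksLowerUnit, fromBlocks_multiply, Matrix.mul_assoc]
  rw [hLDU, hinv]
  refine ((of_mul_eq_one (mul_invOf_self A) (invOf_mul_self A)).fromBlocks_zero_zero
    hS).units_mul_mul _ _ ?_ ?_
  · rw [fromBlocks_zero_zero_mul_fromBlocks_zero_zero, mul_invOf_self]
    exact commute_fromBlocksLowerUnit (by rw [← Matrix.mul_assoc, hC])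
  · rw [fromBlocks_zero_zero_mul_fromBlocks_zero_zero, invOf_mul_self]
    exact commute_fromBlocksUpperUnit (by rw [Matrix.mul_assoc, ← Matrix.mul_assoc B, hB])

end IsMoorePenroseInverse

theorem stmt16 {p q : ℕ} (M P : Matrix (Fin p) (Fin p) ℂ)
    (hM : M.PosDef) (hP : P.PosDef)
    (E : Matrix (Fin p) (Fin q) ℂ) (ω₁ ω₂ : ℂ)
    (B Bd : Matrix (Fin q) (Fin q) ℂ) (hB : B = Eᴴ * P⁻¹ * E)
    (h1 : B * Bd * B = B) (h2 : Bd * B * Bd = Bd)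
    (h3 : (B * Bd)ᴴ = B * Bd) (h4 : (Bd * B)ᴴ = Bd * B) :
    let Y : Matrix (Fin p ⊕ Fin q) (Fin p ⊕ Fin q) ℂ :=
      fromBlocks M (ω₂ • E) (-(ω₁ • Eᴴ)) (B - (ω₁ * ω₂) • (Eᴴ * M⁻¹ * E))
    let X : Matrix (Fin p ⊕ Fin q) (Fin p ⊕ Fin q) ℂ :=
      fromBlocks (M⁻¹ - (ω₁ * ω₂) • (M⁻¹ * E * Bd * Eᴴ * M⁻¹)) (-(ω₂ • (M⁻¹ * E * Bd)))
        (ω₁ • (Bd * Eᴴ * M⁻¹)) Bd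
    Y * X * Y = Y ∧ X * Y * X = X ∧ (Y * X)ᴴ = Y * X ∧ (X * Y)ᴴ = X * Y := by
  intro Y X
  let := hM.isUnit.invertible
  have hBd : IsMoorePenroseInverse B Bd := ⟨h1, h2, h3, h4⟩
  have hgram : IsMoorePenroseInverse (Eᴴ * P⁻¹ * E) Bd := hB ▸ hBd
  have hC : B * Bd * -(ω₁ • Eᴴ) = -(ω₁ • Eᴴ) := by
    rw [Matrix.mul_neg, Matrix.mul_smul, hB, hgram.gram_mul_mul_conjTranspose hP.inv]
  have hE : ω₂ • E * Bd * B = ω₂ • E := by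
    rw [Matrix.smul_mul, Matrix.smul_mul, hB, hgram.mul_mul_gram hP.inv]
  have hY : Y = fromBlocks M (ω₂ • E) (-(ω₁ • Eᴴ)) (B + -(ω₁ • Eᴴ) * ⅟M * (ω₂ • E)) := by
    simp only [Y, invOf_eq_nonsing_inv]
    congr 1
    simp only [Matrix.neg_mul, Matrix.smul_mul, Matrix.mul_smul]
    module
  have hX : X = fromBlocks (⅟M + ⅟M * (ω₂ • E) * Bd * -(ω₁ • Eᴴ) * ⅟M)
      (-(⅟M * (ω₂ • E) * Bd)) (-(Bd * -(ω₁ • Eᴴ) * ⅟M)) Bd := by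
    simp only [X, invOf_eq_nonsing_inv]
    congr 1
    · simp only [Matrix.neg_mul, Matrix.mul_neg, Matrix.smul_mul, Matrix.mul_smul,
        Matrix.mul_assoc]
      module
    all_goals simp only [Matrix.neg_mul, Matrix.mul_neg, Matrix.smul_mul, Matrix.mul_smul,
      Matrix.mul_assoc, neg_neg]
  obtain ⟨hYXY, hXYX, hYX, hXY⟩ := hY ▸ hX ▸ hBd.fromBlocks_of_schur M _ _ hC hE
  exact ⟨hYXY, hXYX, hYX, hXY⟩
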